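/- Let (Y_j, Y_{j+1}) be a two-step nonnegative martingale (i.e., Y_j, Y_{j+1} are nonnegative integrable random variables on a filtered probability space with E[Y_{j+1} | F_j] = Y_j almost surely and Y_j is F_j-measurable), with E[Y_j] = 1. Let 0 < K¹ < ⋯ < Kᴺ be real numbers, let q_j, q_{j+1} ∈ ℝᴺ be entrywise nonnegative with entries summing to 1, and suppose q_{j+1} = P·q_j for some matrix P ∈ ℝ^{N×N} with P ≥ 0 entrywise, columns summing to 1, and Σ_i Kⁱ·P_{i,ℓ} = K^ℓ for every ℓ. Then for every K ≥ 0: Σ_{i=1}^{N} q_j^i·E[(Kⁱ·Y_j − K)⁺] ≤ Σ_{i=1}^{N} q_{j+1}^i·E[(Kⁱ·Y_{j+1} − K)⁺]. -/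

import Mathlib

/-!
Conditional Jensen gives `E[φ(Y_j)] ≤ E[φ(Y_{j+1})]` for every convex `φ`, in particular for
each call payoff `t ↦ (Kⁱ t - x)⁺`. On the strike side, column `ℓ` of `P` is a probability
vector with mean `K^ℓ`, so convexity of `k ↦ (k y - x)⁺` gives
`(K^ℓ y - x)⁺ ≤ Σ_i P_{i,ℓ} (Kⁱ y - x)⁺`; summing against `q_j` turns this into the weights
`q_{j+1} = P q_j`.
-/

open MeasureTheory Finset

theorem integral_comp_le_of_condExp_ae_eq {E Ω : Type*} [NormedAddCommGroup E]
    [NormedSpace ℝ E] [CompleteSpace E] {m m0 : MeasurableSpace Ω} {μ : Measure Ω}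
    (hm : m ≤ m0) [SigmaFinite (μ.trim hm)]
    {φ : E → ℝ} (hφ : ConvexOn ℝ Set.univ φ) (hφc : LowerSemicontinuous φ) {X Y : Ω → E}
    (hY : Integrable Y μ) (hφX : Integrable (φ ∘ X) μ) (hφY : Integrable (φ ∘ Y) μ)
    (hXY : μ[Y|m] =ᵐ[μ] X) :
    ∫ ω, φ (X ω) ∂μ ≤ ∫ ω, φ (Y ω) ∂μ :=
  calc ∫ ω, φ (X ω) ∂μ ≤ ∫ ω, (μ[φ ∘ Y|m]) ω ∂μ := by
        refine integral_mono_ae hφX integrable_condExp ?_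
        filter_upwards [hφ.map_condExp_le_univ hm hφc hY hφY, hXY] with ω hω hωX
        simpa [hωX] using hω
    _ = ∫ ω, φ (Y ω) ∂μ := integral_condExp hm

theorem convexOn_max_mul_sub_zero (a x : ℝ) :
    ConvexOn ℝ Set.univ fun t : ℝ ↦ max (a * t - x) 0 := by
  have : ConvexOn ℝ Set.univ fun t : ℝ ↦ a * t - x :=
    ((LinearMap.mulLeft ℝ a).convexOn convex_univ).sub (concaveOn_const x convex_univ)
  exact this.sup (convexOn_const 0 convex_univ)

section CallPrice

variable {Ω : Type*} {m0 : MeasurableSpace Ω} {μ : Measure Ω}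

noncomputable def callPrice (μ : Measure Ω) (Y : Ω → ℝ) (x k : ℝ) : ℝ :=
  ∫ ω, max (k * Y ω - x) 0 ∂μ

theorem integrable_max_mul_sub_zero [IsFiniteMeasure μ] {Y : Ω → ℝ} (hY : Integrable Y μ)
    (k x : ℝ) : Integrable (fun ω ↦ max (k * Y ω - x) 0) μ :=
  ((hY.const_mul k).sub (integrable_const x)).pos_part

theorem callPrice_le_of_condExp_ae_eq [IsFiniteMeasure μ] {m : MeasurableSpace Ω} (hm : m ≤ m0)
    {X Y : Ω → ℝ} (hY : Integrable Y μ) (hXY : μ[Y|m] =ᵐ[μ] X)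
    (x k : ℝ) : callPrice μ X x k ≤ callPrice μ Y x k :=
  integral_comp_le_of_condExp_ae_eq hm (convexOn_max_mul_sub_zero k x)
    (by fun_prop : Continuous fun t : ℝ ↦ max (k * t - x) 0).lowerSemicontinuous hY
    (integrable_max_mul_sub_zero (integrable_condExp.congr hXY) k x)
    (integrable_max_mul_sub_zero hY k x) hXY

theorem callPrice_le_sum_of_weighted_mean [IsFiniteMeasure μ] {ι : Type*} {s : Finset ι}
    {w k : ι → ℝ} {k₀ : ℝ} (hw₀ : ∀ i ∈ s, 0 ≤ w i) (hw₁ : ∑ i ∈ s, w i = 1)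
    (hk : ∑ i ∈ s, w i * k i = k₀) {Y : Ω → ℝ} (hY : Integrable Y μ) (x : ℝ) :
    callPrice μ Y x k₀ ≤ ∑ i ∈ s, w i * callPrice μ Y x (k i) := by
  have hpayoff (ω : Ω) : max (k₀ * Y ω - x) 0 ≤ ∑ i ∈ s, w i * max (k i * Y ω - x) 0 := by
    have := (convexOn_max_mul_sub_zero (Y ω) x).map_sum_le hw₀ hw₁ (fun i _ ↦ Set.mem_univ (k i))
    simpa only [smul_eq_mul, ← hk, mul_comm (Y ω)] using this
  calc callPrice μ Y x k₀ ≤ ∫ ω, ∑ i ∈ s, w i * max (k i * Y ω - x) 0 ∂μ :=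
        integral_mono (integrable_max_mul_sub_zero hY k₀ x)
          (integrable_finsetSum _ fun i _ ↦ (integrable_max_mul_sub_zero hY (k i) x).const_mul _)
          hpayoff
    _ = ∑ i ∈ s, w i * callPrice μ Y x (k i) := by
        rw [integral_finsetSum _ fun i _ ↦ (integrable_max_mul_sub_zero hY (k i) x).const_mul _]
        simp only [integral_const_mul, callPrice]

end CallPrice

theorem stmt_12_general {Ω : Type*} {m0 : MeasurableSpace Ω} {μ : Measure Ω} [IsProbabilityMeasure μ]
    (𝒢 : MeasurableSpace Ω) (h𝒢 : 𝒢 ≤ m0)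
    (Yj Yj1 : Ω → ℝ)
    (hYj1int : Integrable Yj1 μ)
    (hmart : μ[Yj1|𝒢] =ᵐ[μ] Yj)
    {N : ℕ} (K : Fin N → ℝ)
    (P : Matrix (Fin N) (Fin N) ℝ)
    (hPnn : ∀ i l, 0 ≤ P i l)
    (hPcol : ∀ l, ∑ i, P i l = 1)
    (hPmart : ∀ l, ∑ i, K i * P i l = K l)
    (qj qj1 : Fin N → ℝ)
    (hqjnn : ∀ i, 0 ≤ qj i)
    (hstep : qj1 = P.mulVec qj) :
    ∀ x, 0 ≤ x →
      ∑ i, qj i * ∫ ω, max (K i * Yj ω - x) 0 ∂μ ≤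
        ∑ i, qj1 i * ∫ ω, max (K i * Yj1 ω - x) 0 ∂μ := by
  intro x _
  have hcolumn (l : Fin N) : callPrice μ Yj1 x (K l) ≤ ∑ i, P i l * callPrice μ Yj1 x (K i) :=
    callPrice_le_sum_of_weighted_mean (fun i _ ↦ hPnn i l) (hPcol l)
      (by simpa only [mul_comm] using hPmart l) hYj1int x
  calc ∑ i, qj i * callPrice μ Yj x (K i)
      ≤ ∑ i, qj i * callPrice μ Yj1 x (K i) := sum_le_sum fun i _ ↦
        mul_le_mul_of_nonneg_left
          (callPrice_le_of_condExp_ae_eq h𝒢 hYj1int hmart x (K i)) (hqjnn i)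
    _ ≤ ∑ l, qj l * ∑ i, P i l * callPrice μ Yj1 x (K i) := sum_le_sum fun l _ ↦
        mul_le_mul_of_nonneg_left (hcolumn l) (hqjnn l)
    _ = ∑ i, qj1 i * callPrice μ Yj1 x (K i) := by
        simp only [hstep, Matrix.mulVec, dotProduct, mul_sum, sum_mul]
        rw [sum_comm]
        exact sum_congr rfl fun l _ ↦ sum_congr rfl fun i _ ↦ by ring

/-- for a two-step nonnegative martingale `(Y_j, Y_{j+1})` with
`E[Y_j] = 1` and densities `q_{j+1} = P·q_j` related by a martingale transition
operator `P`, the mixed call prices are increasing in time. -/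
theorem stmt_12 {Ω : Type*} {m0 : MeasurableSpace Ω} {μ : Measure Ω} [IsProbabilityMeasure μ]
    (𝒢 : MeasurableSpace Ω) (h𝒢 : 𝒢 ≤ m0)
    (Yj Yj1 : Ω → ℝ)
    (hYjnn : ∀ ω, 0 ≤ Yj ω) (hYj1nn : ∀ ω, 0 ≤ Yj1 ω)
    (hYjint : Integrable Yj μ) (hYj1int : Integrable Yj1 μ)
    (hYjmeas : StronglyMeasurable[𝒢] Yj)
    (hmart : μ[Yj1|𝒢] =ᵐ[μ] Yj)
    (hmean : ∫ ω, Yj ω ∂μ = 1)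
    {N : ℕ} (K : Fin N → ℝ) (hKpos : ∀ i, 0 < K i) (hKmono : StrictMono K)
    (P : Matrix (Fin N) (Fin N) ℝ)
    (hPnn : ∀ i l, 0 ≤ P i l)
    (hPcol : ∀ l, ∑ i, P i l = 1)
    (hPmart : ∀ l, ∑ i, K i * P i l = K l)
    (qj qj1 : Fin N → ℝ)
    (hqjnn : ∀ i, 0 ≤ qj i) (hqjsum : ∑ i, qj i = 1)
    (hqj1nn : ∀ i, 0 ≤ qj1 i) (hqj1sum : ∑ i, qj1 i = 1)
    (hstep : qj1 = P.mulVec qj) :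
    ∀ x, 0 ≤ x →
      ∑ i, qj i * ∫ ω, max (K i * Yj ω - x) 0 ∂μ ≤
        ∑ i, qj1 i * ∫ ω, max (K i * Yj1 ω - x) 0 ∂μ :=
  stmt_12_general 𝒢 h𝒢 Yj Yj1 hYj1int hmart K P hPnn hPcol hPmart qj qj1 hqjnn hstep
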